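/- arXiv:1610.01850 — 6 statements merged into one kernel-verified Lean document; each statement's English description precedes it below -/
import Mathlib

section
/- Let I be an ideal of Π with Π_n ∩ I = 0 and dim(Π_{n+1} ∩ I) = n + 2 (as a real vector space). If h_0, …, h_{n+1} is a vector-space basis of Π_{n+1} ∩ I, then h_0, …, h_{n+1} is an H-basis of the ideal I. -/
/-! Since `I` contains no nonzero polynomial of degree `≤ n`, the degree-`(n+1)` homogeneous
components `L i` of the `h i` are linearly independent, so the `n + 2` of them span the
`(n+2)`-dimensional space of binary forms of degree `n + 1`. Hence every form of degree
`d ≥ n + 1` is `∑ q i * L i` with `deg q i ≤ d - (n + 1)`. Writing the leading form of `f ∈ I`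
this way, `f - ∑ q i * h i` lies in `I` and has smaller degree, and the induction on `deg f` ends
in degree `≤ n`, where `f = 0`. -/

open MvPolynomial

noncomputable section

abbrev Pt : Type := Fin 2 → ℝ
abbrev BPoly : Type := MvPolynomial (Fin 2) ℝ

/-- `Π_n`: the space of bivariate polynomials of total degree at most `n`. -/
def PiLE (n : ℕ) : Submodule ℝ BPoly := MvPolynomial.restrictTotalDegree (Fin 2) ℝ n

/-- The vanishing ideal `I(Y)` of a set `Y ⊆ ℝ²`. -/
def vIdeal (Y : Set Pt) : Ideal BPoly where
  carrier := {p | ∀ y ∈ Y, eval y p = 0}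
  add_mem' := by
    intro a b ha hb y hy
    simp [map_add, ha y hy, hb y hy]
  zero_mem' := by intro y hy; simp
  smul_mem' := by
    intro c a ha y hy
    simp [smul_eq_mul, ha y hy]

/-- `I(Y)` as an `ℝ`-subspace of `Π`. -/
def vSub (Y : Set Pt) : Submodule ℝ BPoly := (vIdeal Y).restrictScalars ℝ

/-- `Y` is `Π_n`-poised: every interpolation problem on `Y` has a unique solution in `Π_n`. -/
def Poised (n : ℕ) (Y : Finset Pt) : Prop :=
  ∀ f : Pt → ℝ, ∃! p : BPoly, p ∈ PiLE n ∧ ∀ y ∈ Y, eval y p = f y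

/-- `Y` is `Π_n`-independent: every interpolation problem on `Y` has a solution in `Π_n`. -/
def PIndep (n : ℕ) (Y : Finset Pt) : Prop :=
  ∀ f : Pt → ℝ, ∃ p ∈ PiLE n, ∀ y ∈ Y, eval y p = f y

/-- `ℓ y` is the fundamental (Lagrange) polynomial of `y ∈ Y` in `Π_n`. -/
def IsFundamental (n : ℕ) (Y : Finset Pt) (ℓ : Pt → BPoly) : Prop :=
  ∀ y ∈ Y, ℓ y ∈ PiLE n ∧ ∀ y' ∈ Y, eval y' (ℓ y) = if y' = y then 1 else 0

/-- A finite family is an H-basis of the ideal `I`. -/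
def IsHBasisFam {ι : Type} [Fintype ι] (I : Ideal BPoly) (h : ι → BPoly) : Prop :=
  (∀ i, h i ∈ I) ∧ ∀ f ∈ I, ∃ g : ι → BPoly,
    (∀ i, (g i).totalDegree ≤ f.totalDegree - (h i).totalDegree) ∧ f = ∑ i, g i * h i

/-- A finite set is an H-basis of the ideal `I`. -/
def IsHBasisSet (I : Ideal BPoly) (H : Finset BPoly) : Prop :=
  (∀ p ∈ H, p ∈ I) ∧ ∀ f ∈ I, ∃ g : BPoly → BPoly,
    (∀ p ∈ H, (g p).totalDegree ≤ f.totalDegree - p.totalDegree) ∧ f = ∑ p ∈ H, g p * p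

/-- `M` is a linear syzygy matrix for the family `h`. -/
def IsLinSyz (n : ℕ) (h : Fin (n + 2) → BPoly)
    (M : Matrix (Fin (n + 1)) (Fin (n + 2)) BPoly) : Prop :=
  (∀ i j, M i j ∈ PiLE 1) ∧ ∀ i, ∑ j, M i j * h j = 0

/-- The rank of a polynomial matrix over the field of rational functions. -/
def ratRank {a b : ℕ} (M : Matrix (Fin a) (Fin b) BPoly) : ℕ :=
  (M.map (algebraMap BPoly (FractionRing BPoly))).rank

namespace MvPolynomial

variable {σ R : Type*} [CommRing R]

theorem totalDegree_sub_homogeneousComponent_le {p : MvPolynomial σ R} {e : ℕ}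
    (hp : p.totalDegree ≤ e + 1) : (p - homogeneousComponent (e + 1) p).totalDegree ≤ e := by
  rw [totalDegree, Finset.sup_le_iff]
  intro m hm
  rw [mem_support_iff, coeff_sub, coeff_homogeneousComponent] at hm
  have hle : m.degree ≤ e + 1 := by
    by_contra! hlt
    exact hm (by rw [coeff_eq_zero_of_totalDegree_lt (lt_of_le_of_lt hp hlt)]; simp)
  have hne : m.degree ≠ e + 1 := fun heq => hm (by simp [heq])
  change m.degree ≤ e
  omega

theorem finrank_homogeneousSubmodule [Fintype σ] [Nontrivial R] (d : ℕ) :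
    Module.finrank R (homogeneousSubmodule σ R d) = (Fintype.card σ).multichoose d := by
  classical
  have hmonomials : {m : σ →₀ ℕ | m.degree = d} =
      ((Finset.univ : Finset σ).finsuppAntidiag d : Set (σ →₀ ℕ)) := by
    ext m
    simp [Finsupp.degree_eq_sum]
  rw [homogeneousSubmodule_eq_finsupp_supported, hmonomials,
    (AddMonoidAlgebra.supportedEquivFinsupp _).finrank_eq, Module.finrank_finsupp_self]
  simp [Finset.card_finsuppAntidiag_nat_eq_multichoose]

theorem IsHomogeneous.exists_sum_mul_eq_of_le_span {p : MvPolynomial σ R} {d : ℕ}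
    (hp : p.IsHomogeneous d) {ι : Type*} [Fintype ι] {L : ι → MvPolynomial σ R} {k : ℕ}
    (hL : homogeneousSubmodule σ R k ≤ Submodule.span R (Set.range L)) (hkd : k ≤ d) :
    ∃ q : ι → MvPolynomial σ R, (∀ i, (q i).totalDegree ≤ d - k) ∧ p = ∑ i, q i * L i := by
  let T : Submodule R (MvPolynomial σ R) :=
    (Submodule.pi Set.univ fun _ => restrictTotalDegree σ R (d - k)).map
      ((Fintype.linearCombination (MvPolynomial σ R) L).restrictScalars R)
  suffices hT : homogeneousSubmodule σ R d ≤ T by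
    obtain ⟨q, hq, hqp⟩ := Submodule.mem_map.mp (hT hp)
    exact ⟨q, fun i => (mem_restrictTotalDegree _ _ _).mp (hq i trivial), hqp.symm⟩
  rw [homogeneousSubmodule_eq_finsupp_supported, AddMonoidAlgebra.supported_eq_span_single,
    Submodule.span_le]
  rintro _ ⟨m, hm : m.degree = d, rfl⟩
  obtain ⟨m', hm'm, hm'⟩ := Finsupp.exists_le_degree_eq m k (hm ▸ hkd)
  obtain ⟨c, hc⟩ := (Submodule.mem_span_range_iff_exists_fun R).mp
    (hL (isHomogeneous_monomial (1 : R) hm'))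
  have hdeg : (m - m').degree = d - k := by
    have := congrArg Finsupp.degree (tsub_add_cancel_of_le hm'm)
    rw [map_add] at this
    omega
  refine ⟨fun i => monomial (m - m') (c i), fun i _ => ?_, ?_⟩
  · exact (mem_restrictTotalDegree _ _ _).mpr <| (totalDegree_monomial_le _ _).trans hdeg.le
  · simp only [LinearMap.coe_restrictScalars, Fintype.linearCombination_apply, smul_eq_mul]
    have hsplit : monomial m (1 : R) = monomial (m - m') 1 * monomial m' 1 := by
      rw [monomial_mul, mul_one, tsub_add_cancel_of_le hm'm]
    rw [single_eq_monomial, hsplit, ← hc, Finset.mul_sum]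
    refine Finset.sum_congr rfl fun i _ => ?_
    rw [mul_smul_comm, ← smul_mul_assoc, smul_monomial, smul_eq_mul, mul_one]

section LeadingForms

variable {ι : Type*} [Fintype ι] {I : Ideal (MvPolynomial σ R)} {n : ℕ}
  {h : ι → MvPolynomial σ R}

theorem linearIndependent_homogeneousComponent
    (hlow : ∀ p ∈ I, p.totalDegree ≤ n → p = 0) (hI : ∀ i, h i ∈ I)
    (hdeg : ∀ i, (h i).totalDegree ≤ n + 1) (hind : LinearIndependent R h) :
    LinearIndependent R fun i => homogeneousComponent (n + 1) (h i) := by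
  rw [Fintype.linearIndependent_iff] at hind ⊢
  intro c hc
  refine hind c (hlow _ (I.sum_mem fun i _ => I.smul_of_tower_mem (c i) (hI i)) ?_)
  have hp : (∑ i, c i • h i).totalDegree ≤ n + 1 :=
    (totalDegree_finsetSum _ _).trans <| Finset.sup_le fun i _ =>
      (totalDegree_smul_le _ _).trans (hdeg i)
  have hcomp : homogeneousComponent (n + 1) (∑ i, c i • h i) = 0 := by
    simpa only [map_sum, map_smul] using hc
  simpa [hcomp] using totalDegree_sub_homogeneousComponent_le hp

theorem exists_totalDegree_sub_sum_mul_lt (hdeg : ∀ i, (h i).totalDegree ≤ n + 1)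
    (hspan : homogeneousSubmodule σ R (n + 1) ≤
      Submodule.span R (Set.range fun i => homogeneousComponent (n + 1) (h i)))
    {f : MvPolynomial σ R} (hf : n + 1 ≤ f.totalDegree) :
    ∃ q : ι → MvPolynomial σ R, (∀ i, (q i).totalDegree ≤ f.totalDegree - (n + 1)) ∧
      (f - ∑ i, q i * h i).totalDegree < f.totalDegree := by
  obtain ⟨d, hd⟩ : ∃ d, f.totalDegree = d + 1 := ⟨f.totalDegree - 1, by omega⟩
  obtain ⟨q, hq, hqf⟩ :=
    (homogeneousComponent_isHomogeneous f.totalDegree f).exists_sum_mul_eq_of_le_span hspan hf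
  refine ⟨q, hq, ?_⟩
  have hsplit : f - ∑ i, q i * h i = (f - homogeneousComponent (d + 1) f) -
      ∑ i, q i * (h i - homogeneousComponent (n + 1) (h i)) := by
    rw [← hd, hqf]
    simp only [mul_sub, Finset.sum_sub_distrib]
    abel
  rw [hsplit, hd, Nat.lt_succ_iff]
  refine (totalDegree_sub _ _).trans (max_le (totalDegree_sub_homogeneousComponent_le hd.le) ?_)
  refine (totalDegree_finsetSum _ _).trans (Finset.sup_le fun i _ => ?_)
  have := totalDegree_sub_homogeneousComponent_le (hdeg i)
  have := hq i
  exact (totalDegree_mul _ _).trans (by omega)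

theorem exists_sum_mul_eq_of_mem_of_le_span (hlow : ∀ p ∈ I, p.totalDegree ≤ n → p = 0)
    (hI : ∀ i, h i ∈ I) (hdeg : ∀ i, (h i).totalDegree ≤ n + 1)
    (hspan : homogeneousSubmodule σ R (n + 1) ≤
      Submodule.span R (Set.range fun i => homogeneousComponent (n + 1) (h i)))
    {f : MvPolynomial σ R} (hf : f ∈ I) :
    ∃ g : ι → MvPolynomial σ R,
      (∀ i, (g i).totalDegree ≤ f.totalDegree - (n + 1)) ∧ f = ∑ i, g i * h i := by
  induction hd : f.totalDegree using Nat.strong_induction_on generalizing f with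
  | _ d ih =>
  subst hd
  by_cases hfn : f.totalDegree ≤ n
  · exact ⟨0, fun _ => by simp, by simp [hlow f hf hfn]⟩
  obtain ⟨q, hq, hlt⟩ := exists_totalDegree_sub_sum_mul_lt hdeg hspan (f := f) (by omega)
  obtain ⟨g, hg, hfg⟩ :=
    ih _ hlt (I.sub_mem hf (I.sum_mem fun i _ => I.mul_mem_left _ (hI i))) rfl
  refine ⟨q + g, fun i => (totalDegree_add _ _).trans (max_le (hq i) ((hg i).trans ?_)), ?_⟩
  · omega
  · simp only [Pi.add_apply, add_mul, Finset.sum_add_distrib, ← hfg]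
    abel

end LeadingForms

theorem span_eq_homogeneousSubmodule_of_linearIndependent {K ι : Type*} [Field K] [Fintype σ]
    [Fintype ι] {L : ι → MvPolynomial σ K} {d : ℕ} (hL : ∀ i, (L i).IsHomogeneous d)
    (hind : LinearIndependent K L) (hcard : Fintype.card ι = (Fintype.card σ).multichoose d) :
    Submodule.span K (Set.range L) = homogeneousSubmodule σ K d := by
  have : FiniteDimensional K (homogeneousSubmodule σ K d) :=
    Module.Finite.iff_fg.mpr (homogeneousSubmodule_fg σ K d)
  refine Submodule.eq_of_le_of_finrank_eq
    (Submodule.span_le.mpr (Set.range_subset_iff.mpr hL)) ?_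
  rw [finrank_span_eq_card hind, hcard, finrank_homogeneousSubmodule]

end MvPolynomial

theorem stmt2_general (n : ℕ) (I : Ideal BPoly)
    (h0 : PiLE n ⊓ I.restrictScalars ℝ = ⊥)
    (h : Fin (n + 2) → BPoly)
    (hmem : ∀ i, h i ∈ PiLE (n + 1) ⊓ I.restrictScalars ℝ)
    (hind : LinearIndependent ℝ h) :
    IsHBasisFam I h := by
  have hlow : ∀ p ∈ I, p.totalDegree ≤ n → p = 0 := fun p hp hpn => by
    have hp' : p ∈ PiLE n ⊓ I.restrictScalars ℝ :=
      ⟨(mem_restrictTotalDegree _ _ _).mpr hpn, hp⟩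
    simpa [h0] using hp'
  have hI : ∀ i, h i ∈ I := fun i => (hmem i).2
  have hdeg : ∀ i, (h i).totalDegree ≤ n + 1 := fun i =>
    (mem_restrictTotalDegree _ _ _).mp (hmem i).1
  have hspan := span_eq_homogeneousSubmodule_of_linearIndependent
    (fun i => homogeneousComponent_isHomogeneous (n + 1) (h i))
    (linearIndependent_homogeneousComponent hlow hI hdeg hind) (by simp [Nat.multichoose_two])
  refine ⟨hI, fun f hf => ?_⟩
  obtain ⟨g, hg, hfg⟩ := exists_sum_mul_eq_of_mem_of_le_span hlow hI hdeg hspan.ge hf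
  exact ⟨g, fun i => (hg i).trans (by have := hdeg i; omega), hfg⟩

/-- If `Π_n ∩ I = 0` and `dim (Π_{n+1} ∩ I) = n+2`, then any
vector-space basis `h_0, …, h_{n+1}` of `Π_{n+1} ∩ I` is an H-basis of `I`. -/
theorem stmt2 (n : ℕ) (I : Ideal BPoly)
    (h0 : PiLE n ⊓ I.restrictScalars ℝ = ⊥)
    (h1 : Module.finrank ℝ ↥(PiLE (n + 1) ⊓ I.restrictScalars ℝ) = n + 2)
    (h : Fin (n + 2) → BPoly)
    (hmem : ∀ i, h i ∈ PiLE (n + 1) ⊓ I.restrictScalars ℝ)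
    (hind : LinearIndependent ℝ h)
    (hspan : Submodule.span ℝ (Set.range h) = PiLE (n + 1) ⊓ I.restrictScalars ℝ) :
    IsHBasisFam I h :=
  stmt2_general n I h0 h hmem hind
end
end

section
/- Let I be an ideal of Π with Π_n ∩ I = 0 and dim(Π_{n+1} ∩ I) = n + 2 (as a real vector space). If h_0, …, h_{n+1} ∈ I form an H-basis of I, then h_0, …, h_{n+1} form a vector-space basis of Π_{n+1} ∩ I. -/
open MvPolynomial

noncomputable section

/-! Since `Π_n ∩ I = 0`, every nonzero `h i` has degree at least `n + 1`. In an H-representation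
`f = ∑ g i * h i` of some `f ∈ Π_{n+1} ∩ I` the degree bounds therefore force each `g i` to be a
constant, so the `n + 2` polynomials `h i` span the `(n + 2)`-dimensional space `Π_{n+1} ∩ I`,
and hence form a basis of it. -/

section

variable {σ R : Type*} [CommSemiring R]

theorem lt_totalDegree_of_restrictTotalDegree_inf_eq_bot {n : ℕ}
    {K : Submodule R (MvPolynomial σ R)} (hK : restrictTotalDegree σ R n ⊓ K = ⊥)
    {p : MvPolynomial σ R} (hp : p ∈ K) (hp0 : p ≠ 0) : n < p.totalDegree := by
  by_contra! hle
  have hp' : p ∈ restrictTotalDegree σ R n ⊓ K := ⟨(mem_restrictTotalDegree _ _ _).2 hle, hp⟩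
  rw [hK, Submodule.mem_bot] at hp'
  exact hp0 hp'

theorem mem_span_range_of_eq_sum_mul {ι : Type*} [Fintype ι] {f : MvPolynomial σ R}
    {g h : ι → MvPolynomial σ R}
    (hg : ∀ i, (g i).totalDegree ≤ f.totalDegree - (h i).totalDegree)
    (hf : f = ∑ i, g i * h i) (hh : ∀ i, h i ≠ 0 → f.totalDegree ≤ (h i).totalDegree) :
    f ∈ Submodule.span R (Set.range h) := by
  rw [hf]
  refine Submodule.sum_mem _ fun i _ => ?_
  by_cases hi : h i = 0
  · simp [hi]
  have hgi : (g i).totalDegree = 0 := by have := hh i hi; have := hg i; omega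
  rw [totalDegree_eq_zero_iff_eq_C.1 hgi, ← smul_eq_C_mul]
  exact Submodule.smul_mem _ _ (Submodule.subset_span ⟨i, rfl⟩)

end

theorem span_range_eq_and_linearIndependent_of_le_span {K V ι : Type*} [DivisionRing K]
    [AddCommGroup V] [Module K V] [Fintype ι] {v : ι → V} {S : Submodule K V}
    (hS : S ≤ Submodule.span K (Set.range v)) (hrank : Module.finrank K S = Fintype.card ι) :
    Submodule.span K (Set.range v) = S ∧ LinearIndependent K v := by
  have := FiniteDimensional.span_of_finite K (Set.finite_range v)
  have hSv : S = Submodule.span K (Set.range v) :=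
    Submodule.eq_of_le_of_finrank_le hS (hrank ▸ finrank_range_le_card v)
  refine ⟨hSv.symm, linearIndependent_iff_card_eq_finrank_span.2 ?_⟩
  rw [Set.finrank, ← hSv, hrank]

theorem stmt3_general (n : ℕ) (I : Ideal BPoly)
    (h0 : PiLE n ⊓ I.restrictScalars ℝ = ⊥)
    (h1 : Module.finrank ℝ ↥(PiLE (n + 1) ⊓ I.restrictScalars ℝ) = n + 2)
    (h : Fin (n + 2) → BPoly)
    (hHB : IsHBasisFam I h) :
    (∀ i, h i ∈ PiLE (n + 1) ⊓ I.restrictScalars ℝ) ∧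
    LinearIndependent ℝ h ∧
    Submodule.span ℝ (Set.range h) = PiLE (n + 1) ⊓ I.restrictScalars ℝ := by
  obtain ⟨hspan, hind⟩ : Submodule.span ℝ (Set.range h) = PiLE (n + 1) ⊓ I.restrictScalars ℝ ∧
      LinearIndependent ℝ h := by
    refine span_range_eq_and_linearIndependent_of_le_span (fun f hf => ?_)
      (by rw [h1, Fintype.card_fin])
    obtain ⟨g, hg, hfg⟩ := hHB.2 f hf.2
    refine mem_span_range_of_eq_sum_mul hg hfg fun i hi => ?_
    exact ((mem_restrictTotalDegree _ _ _).1 hf.1).trans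
      (lt_totalDegree_of_restrictTotalDegree_inf_eq_bot h0 (hHB.1 i) hi)
  exact ⟨fun i => hspan ▸ Submodule.subset_span ⟨i, rfl⟩, hind, hspan⟩

/-- If `Π_n ∩ I = 0`, `dim (Π_{n+1} ∩ I) = n+2`, and
`h_0, …, h_{n+1} ∈ I` form an H-basis of `I`, then they form a vector-space basis
of `Π_{n+1} ∩ I`. -/
theorem stmt3 (n : ℕ) (I : Ideal BPoly)
    (h0 : PiLE n ⊓ I.restrictScalars ℝ = ⊥)
    (h1 : Module.finrank ℝ ↥(PiLE (n + 1) ⊓ I.restrictScalars ℝ) = n + 2)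
    (h : Fin (n + 2) → BPoly)
    (hmem : ∀ i, h i ∈ I)
    (hHB : IsHBasisFam I h) :
    (∀ i, h i ∈ PiLE (n + 1) ⊓ I.restrictScalars ℝ) ∧
    LinearIndependent ℝ h ∧
    Submodule.span ℝ (Set.range h) = PiLE (n + 1) ⊓ I.restrictScalars ℝ :=
  stmt3_general n I h0 h1 h hHB
end
end

section
/- For any ideal I of Π and any n ∈ ℕ, the two conditions Π_n ∩ I = 0 and dim(Π_{n+1} ∩ I) = n + 2 hold simultaneously if and only if Π = Π_n ⊕ I (i.e., Π_n ∩ I = 0 and Π_n + I = Π). -/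
open MvPolynomial

noncomputable section

/-!
Assume `Π_n ∩ I = 0`. Then `Π_n + (Π_{n+1} ∩ I)` is a direct sum inside `Π_{n+1}`, and
`dim Π_{n+1} - dim Π_n = n + 2` (the monomials of degree `n + 1`), so the dimension condition says
exactly that `Π_{n+1} ⊆ Π_n + I`. That inclusion makes `Π_n + I` stable under multiplication by
`x₁` and `x₂`, and a subspace containing `1` with this property is all of `Π`.
-/

theorem Submodule.le_sup_iff_finrank_add_finrank_inf_eq {K V : Type*} [DivisionRing K]
    [AddCommGroup V] [Module K V] {A B C : Submodule K V} [FiniteDimensional K B]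
    (hAB : A ≤ B) (hAC : Disjoint A C) :
    B ≤ A ⊔ C ↔ Module.finrank K A + Module.finrank K ↥(B ⊓ C) = Module.finrank K B := by
  have : FiniteDimensional K A := Submodule.finiteDimensional_of_le hAB
  have : FiniteDimensional K ↥(B ⊓ C) := Submodule.finiteDimensional_of_le inf_le_left
  have h_modular : A ⊔ B ⊓ C = (A ⊔ C) ⊓ B := by
    rw [sup_inf_assoc_of_le C hAB, inf_comm]
  have h_finrank :
      Module.finrank K ↥(A ⊔ B ⊓ C) = Module.finrank K A + Module.finrank K ↥(B ⊓ C) := by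
    have := Submodule.finrank_sup_add_finrank_inf_eq A (B ⊓ C)
    rwa [(hAC.mono_right inf_le_right).eq_bot, finrank_bot, add_zero] at this
  rw [← h_finrank, h_modular, ← inf_eq_right]
  exact ⟨fun h => by rw [h], Submodule.eq_of_le_of_finrank_eq inf_le_right⟩

namespace MvPolynomial

section TotalDegree

variable {σ R : Type*} [CommSemiring R]

theorem restrictTotalDegree_mono {m m' : ℕ} (h : m ≤ m') :
    restrictTotalDegree σ R m ≤ restrictTotalDegree σ R m' :=
  restrictSupport_mono R fun _ hd => hd.trans h

theorem X_mul_mem_restrictTotalDegree_succ {m : ℕ} (i : σ) {p : MvPolynomial σ R}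
    (hp : p ∈ restrictTotalDegree σ R m) : X i * p ∈ restrictTotalDegree σ R (m + 1) := by
  rw [mem_restrictTotalDegree] at hp ⊢
  calc (X i * p).totalDegree ≤ (X i).totalDegree + p.totalDegree := totalDegree_mul _ _
    _ ≤ 1 + m := add_le_add ((totalDegree_monomial_le _ _).trans (by simp)) hp
    _ = m + 1 := add_comm 1 m

/-- The `q` with `q * T ⊆ T` are closed under scalars, `+` and `· * X i`, so they are all of
`MvPolynomial σ R`; apply this to `1 ∈ T`. -/
theorem submodule_eq_top_of_one_mem_of_X_mul_mem (T : Submodule R (MvPolynomial σ R))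
    (h_one : (1 : MvPolynomial σ R) ∈ T) (h_X : ∀ i, ∀ p ∈ T, X i * p ∈ T) : T = ⊤ := by
  have h_mul : ∀ q : MvPolynomial σ R, ∀ p ∈ T, q * p ∈ T := by
    intro q
    induction q using MvPolynomial.induction_on with
    | C a => exact fun p hp => by simpa only [C_mul'] using T.smul_mem a hp
    | add q r hq hr =>
      exact fun p hp => by simpa only [add_mul] using T.add_mem (hq p hp) (hr p hp)
    | mul_X q i hq =>
      exact fun p hp => by simpa only [mul_assoc, mul_comm (X i)] using hq _ (h_X i p hp)
  exact eq_top_iff.mpr fun q _ => by simpa using h_mul q 1 h_one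

theorem restrictTotalDegree_succ_le_sup_iff (m : ℕ) (I : Ideal (MvPolynomial σ R)) :
    restrictTotalDegree σ R (m + 1) ≤ restrictTotalDegree σ R m ⊔ I.restrictScalars R ↔
      restrictTotalDegree σ R m ⊔ I.restrictScalars R = ⊤ := by
  refine ⟨fun h => submodule_eq_top_of_one_mem_of_X_mul_mem _ ?_ fun i p hp => ?_,
    fun h => h ▸ le_top⟩
  · refine Submodule.mem_sup_left ((mem_restrictTotalDegree _ _ _).mpr ?_)
    simp
  · obtain ⟨r, hr, f, hf, rfl⟩ := Submodule.mem_sup.mp hp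
    rw [mul_add]
    exact add_mem (h (X_mul_mem_restrictTotalDegree_succ i hr))
      (Submodule.mem_sup_right (I.mul_mem_left (X i) hf))

end TotalDegree

theorem finrank_restrictTotalDegree_succ (σ R : Type*) [Fintype σ] [CommRing R] [Nontrivial R]
    (m : ℕ) :
    Module.finrank R (restrictTotalDegree σ R (m + 1)) =
      Module.finrank R (restrictTotalDegree σ R m) + (Fintype.card σ + m).choose (m + 1) := by
  classical
  let S : ℕ → Set (σ →₀ ℕ) := fun k => {d | (d.sum fun _ e => e) ≤ k}
  have h_finrank : ∀ k, Module.finrank R (restrictTotalDegree σ R k) = (S k).ncard := fun k =>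
    Module.finrank_eq_nat_card_basis (basisRestrictSupport R (S k))
  have h_finite : ∀ k, (S k).Finite := fun k =>
    have : Module.Finite R (restrictSupport R (S k)) :=
      inferInstanceAs (Module.Finite R (restrictTotalDegree σ R k))
    have := Module.Finite.finite_basis (basisRestrictSupport R (S k))
    Set.toFinite _
  let A : Finset (σ →₀ ℕ) := Finset.univ.finsuppAntidiag (m + 1)
  have h_union : S (m + 1) = S m ∪ A := by
    ext d
    simp only [S, A, Set.mem_ofPred_eq, Set.mem_union, Finset.mem_coe,
      Finset.mem_finsuppAntidiag', Finset.subset_univ, and_true]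
    omega
  have h_disj : Disjoint (S m) A := Set.disjoint_left.mpr fun d hd hA => by
    simp only [S, A, Set.mem_ofPred_eq, Finset.mem_coe, Finset.mem_finsuppAntidiag'] at hd hA
    omega
  rw [h_finrank, h_finrank, h_union, Set.ncard_union_eq h_disj (h_finite m) A.finite_toSet,
    Set.ncard_coe_finset, Finset.card_finsuppAntidiag_nat_eq_choose, Finset.card_univ,
    Nat.add_sub_assoc (Nat.le_add_left 1 m), Nat.add_sub_cancel]

end MvPolynomial

/-- For any ideal `I` of `Π` and any `n`, the conditions
`Π_n ∩ I = 0` and `dim (Π_{n+1} ∩ I) = n+2` hold simultaneously iff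
`Π = Π_n ⊕ I`, i.e. `Π_n ∩ I = 0` and `Π_n + I = Π`. -/
theorem stmt4 (n : ℕ) (I : Ideal BPoly) :
    (PiLE n ⊓ I.restrictScalars ℝ = ⊥ ∧
      Module.finrank ℝ ↥(PiLE (n + 1) ⊓ I.restrictScalars ℝ) = n + 2) ↔
    (PiLE n ⊓ I.restrictScalars ℝ = ⊥ ∧
      PiLE n ⊔ I.restrictScalars ℝ = ⊤) := by
  refine and_congr_right fun h_disj => ?_
  unfold PiLE at h_disj ⊢
  rw [← restrictTotalDegree_succ_le_sup_iff, Submodule.le_sup_iff_finrank_add_finrank_inf_eq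
    (restrictTotalDegree_mono (Nat.le_add_right n 1)) (disjoint_iff.mpr h_disj),
    finrank_restrictTotalDegree_succ, Fintype.card_fin, add_comm 2 n, Nat.choose_succ_self_right]
  exact Nat.add_left_cancel_iff.symm
end
end

section
/- Let I be an ideal of Π with Π_n ∩ I = 0 and dim(Π_{n+1} ∩ I) = n + 2, and let P be a finite subset of Π_{n+1} ∩ I that spans the vector space Π_{n+1} ∩ I. Then P is an H-basis of I. -/
/-!
Since `Π_n ∩ I = 0`, taking the homogeneous component of degree `n + 1` is injective on
`Π_{n+1} ∩ I`. This space has dimension `n + 2`, the dimension of the space of binary forms of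
degree `n + 1`, so every such form is the leading form of an element of `span P`. Multiplying by
monomials, every form of degree `m > n` is the leading form of some `∑ g_p p` with
`deg g_p ≤ m - n - 1`. Subtracting it from `f ∈ I` of degree `m` lowers the degree while staying
in `I`, and the descent ends in `Π_n ∩ I = 0`.
-/

open MvPolynomial

noncomputable section

namespace MvPolynomial

section CommRing

variable {σ R : Type*} [CommRing R]

attribute [local instance] MvPolynomial.gradedAlgebra in
theorem homogeneousComponent_mul_of_isHomogeneous {a : MvPolynomial σ R} {i : ℕ}
    (ha : a.IsHomogeneous i) (j : ℕ) (b : MvPolynomial σ R) :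
    homogeneousComponent (i + j) (a * b) = a * homogeneousComponent j b := by
  simpa [← decomposition.decompose'_apply] using
    DirectSum.coe_decompose_mul_add_of_left_mem (homogeneousSubmodule σ R) (b := b) (j := j) ha

theorem totalDegree_le_of_homogeneousComponent_eq_zero {p : MvPolynomial σ R} {k : ℕ}
    (hp : p.totalDegree ≤ k + 1) (htop : homogeneousComponent (k + 1) p = 0) :
    p.totalDegree ≤ k := by
  refine Finset.sup_le fun d hd => ?_
  have hle : d.degree ≤ k + 1 := (le_totalDegree hd).trans hp
  refine Nat.le_of_lt_succ (hle.lt_of_ne fun heq => mem_support_iff.mp hd ?_)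
  simpa [coeff_homogeneousComponent, heq] using congr_arg (coeff d) htop

theorem homogeneousSubmodule_eq_span_monomial (n : ℕ) :
    homogeneousSubmodule σ R n =
      Submodule.span R ((fun d => monomial d 1) '' {d | d.degree = n}) := by
  rw [homogeneousSubmodule_eq_finsupp_supported, AddMonoidAlgebra.supported_eq_span_single]
  rfl

end CommRing

section Field

variable {K : Type*} [Field K]

theorem finrank_homogeneousSubmodule_fin_two_le (n : ℕ) :
    Module.finrank K (homogeneousSubmodule (Fin 2) K n) ≤ n + 1 := by
  classical
  let S : Finset (MvPolynomial (Fin 2) K) := (Finset.range (n + 1)).image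
    fun i => monomial (Finsupp.single 0 i + Finsupp.single 1 (n - i)) 1
  have hle : homogeneousSubmodule (Fin 2) K n ≤ Submodule.span K S := by
    rw [homogeneousSubmodule_eq_span_monomial]
    refine Submodule.span_mono ?_
    rintro _ ⟨d, hd, rfl⟩
    have hd : d 0 + d 1 = n := by simpa [Finsupp.degree_eq_sum, Fin.sum_univ_two] using hd
    refine Finset.mem_image.mpr ⟨d 0, Finset.mem_range.mpr (by omega), ?_⟩
    congr
    ext i
    fin_cases i <;> simp; omega
  calc Module.finrank K (homogeneousSubmodule (Fin 2) K n)
      ≤ Module.finrank K (Submodule.span K (S : Set (MvPolynomial (Fin 2) K))) :=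
        Submodule.finrank_mono hle
    _ ≤ S.card := finrank_span_finset_le_card S
    _ ≤ n + 1 := Finset.card_image_le.trans (by simp)

theorem map_homogeneousComponent_eq_homogeneousSubmodule {σ : Type*} [Finite σ] {k : ℕ}
    {V : Submodule K (MvPolynomial σ K)} (hV : V ≤ restrictTotalDegree σ K (k + 1))
    (hlow : ∀ q ∈ V, q.totalDegree ≤ k → q = 0)
    (hdim : Module.finrank K (homogeneousSubmodule σ K (k + 1)) ≤ Module.finrank K V) :
    V.map (homogeneousComponent (k + 1)) = homogeneousSubmodule σ K (k + 1) := by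
  have : FiniteDimensional K (homogeneousSubmodule σ K (k + 1)) :=
    Module.Finite.iff_fg.mpr (homogeneousSubmodule_fg σ K _)
  let φ := (homogeneousComponent (k + 1) : MvPolynomial σ K →ₗ[K] _) ∘ₗ V.subtype
  have hφ : Function.Injective φ := by
    refine (injective_iff_map_eq_zero φ).mpr fun ⟨q, hq⟩ htop => Subtype.ext (hlow q hq ?_)
    exact totalDegree_le_of_homogeneousComponent_eq_zero
      ((mem_restrictTotalDegree ..).mp (hV hq)) htop
  refine Submodule.eq_of_le_of_finrank_le ?_ ?_
  · rintro _ ⟨q, -, rfl⟩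
    exact homogeneousComponent_mem _ _
  · have hrank := LinearMap.finrank_range_of_inj hφ
    rw [LinearMap.range_comp, Submodule.range_subtype] at hrank
    rwa [hrank]

end Field

section DegreeBoundedSpan

variable {σ R : Type*} [CommRing R]

def degreeBoundedSpan (P : Finset (MvPolynomial σ R)) (k : ℕ) :
    Submodule R (MvPolynomial σ R) where
  carrier := {f | ∃ g : MvPolynomial σ R → MvPolynomial σ R,
    (∀ p ∈ P, (g p).totalDegree ≤ k) ∧ f = ∑ p ∈ P, g p * p}
  add_mem' := by
    rintro _ _ ⟨g₁, hg₁, rfl⟩ ⟨g₂, hg₂, rfl⟩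
    refine ⟨g₁ + g₂, fun p hp => ?_, ?_⟩
    · exact (totalDegree_add _ _).trans (max_le (hg₁ p hp) (hg₂ p hp))
    · simp only [Pi.add_apply, add_mul, Finset.sum_add_distrib]
  zero_mem' := ⟨0, by simp, by simp⟩
  smul_mem' := by
    rintro c _ ⟨g, hg, rfl⟩
    refine ⟨c • g, fun p hp => (totalDegree_smul_le _ _).trans (hg p hp), ?_⟩
    simp only [Finset.smul_sum, Pi.smul_apply, smul_mul_assoc]

theorem degreeBoundedSpan_mono (P : Finset (MvPolynomial σ R)) :
    Monotone (degreeBoundedSpan P) := by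
  rintro k k' hk _ ⟨g, hg, rfl⟩
  exact ⟨g, fun p hp => (hg p hp).trans hk, rfl⟩

theorem degreeBoundedSpan_le_restrictScalars {P : Finset (MvPolynomial σ R)}
    {I : Ideal (MvPolynomial σ R)} (hP : ∀ p ∈ P, p ∈ I) (k : ℕ) :
    degreeBoundedSpan P k ≤ I.restrictScalars R := by
  rintro _ ⟨g, -, rfl⟩
  exact I.sum_mem fun p hp => I.mul_mem_left _ (hP p hp)

theorem monomial_mul_mem_degreeBoundedSpan {P : Finset (MvPolynomial σ R)}
    {q : MvPolynomial σ R} (hq : q ∈ Submodule.span R (P : Set (MvPolynomial σ R)))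
    (ν : σ →₀ ℕ) : monomial ν 1 * q ∈ degreeBoundedSpan P ν.degree := by
  obtain ⟨a, -, rfl⟩ := Submodule.mem_span_finset.mp hq
  refine ⟨fun p => monomial ν (a p), fun p _ => totalDegree_monomial_le _ _, ?_⟩
  simp only [Finset.mul_sum, mul_smul_comm, ← smul_mul_assoc, smul_monomial, smul_eq_mul, mul_one]

variable {P : Finset (MvPolynomial σ R)} {k : ℕ}

theorem homogeneousSubmodule_le_map_degreeBoundedSpan
    (hlead : homogeneousSubmodule σ R (k + 1) ≤
      (Submodule.span R (P : Set (MvPolynomial σ R)) ⊓ restrictTotalDegree σ R (k + 1)).map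
        (homogeneousComponent (k + 1)))
    (j : ℕ) :
    homogeneousSubmodule σ R (j + (k + 1)) ≤ (degreeBoundedSpan P j ⊓
      restrictTotalDegree σ R (j + (k + 1))).map (homogeneousComponent (j + (k + 1))) := by
  rw [homogeneousSubmodule_eq_span_monomial, Submodule.span_le]
  rintro _ ⟨d, hd, rfl⟩
  obtain ⟨κ, hκd, hκ⟩ := Finsupp.exists_le_degree_eq d (k + 1) (by rw [hd]; omega)
  obtain ⟨ν, rfl⟩ := le_iff_exists_add.mp hκd
  have hν : ν.degree = j := by rw [Set.mem_ofPred_eq, map_add, hκ] at hd; omega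
  obtain ⟨q, ⟨hqP, hqdeg⟩, hq⟩ := hlead (isHomogeneous_monomial 1 hκ)
  refine ⟨monomial ν 1 * q, ⟨hν ▸ monomial_mul_mem_degreeBoundedSpan hqP ν, ?_⟩, ?_⟩
  · rw [SetLike.mem_coe, mem_restrictTotalDegree] at hqdeg ⊢
    refine (totalDegree_mul _ _).trans (add_le_add ?_ hqdeg)
    exact (totalDegree_monomial_le _ _).trans hν.le
  · rw [← hν, homogeneousComponent_mul_of_isHomogeneous (isHomogeneous_monomial 1 rfl), hq,
      monomial_mul, one_mul, add_comm]

theorem mem_degreeBoundedSpan_of_mem {I : Ideal (MvPolynomial σ R)} (hP : ∀ p ∈ P, p ∈ I)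
    (hlow : ∀ f ∈ I, f.totalDegree ≤ k → f = 0)
    (hlead : homogeneousSubmodule σ R (k + 1) ≤
      (Submodule.span R (P : Set (MvPolynomial σ R)) ⊓ restrictTotalDegree σ R (k + 1)).map
        (homogeneousComponent (k + 1)))
    {f : MvPolynomial σ R} (hf : f ∈ I) :
    f ∈ degreeBoundedSpan P (f.totalDegree - (k + 1)) := by
  suffices ∀ m, ∀ f ∈ I, f.totalDegree ≤ m → f ∈ degreeBoundedSpan P (m - (k + 1)) from
    this _ f hf le_rfl
  intro m
  induction m with
  | zero =>
    intro f hf hdeg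
    rw [hlow f hf (by omega)]
    exact zero_mem _
  | succ m ih =>
    intro f hf hdeg
    by_cases hmk : m + 1 ≤ k
    · rw [hlow f hf (hdeg.trans hmk)]
      exact zero_mem _
    obtain ⟨j, hj⟩ : ∃ j, m + 1 = j + (k + 1) := ⟨m - k, by omega⟩
    obtain ⟨u, ⟨hu, hudeg⟩, htop⟩ := homogeneousSubmodule_le_map_degreeBoundedSpan hlead j
      (homogeneousComponent_isHomogeneous (j + (k + 1)) f)
    rw [← hj, SetLike.mem_coe, mem_restrictTotalDegree] at hudeg
    rw [← hj] at htop
    have hfu : (f - u).totalDegree ≤ m := by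
      refine totalDegree_le_of_homogeneousComponent_eq_zero ?_ (by rw [map_sub, htop, sub_self])
      exact (totalDegree_sub _ _).trans (max_le hdeg hudeg)
    have hfu' := ih (f - u) (I.sub_mem hf (degreeBoundedSpan_le_restrictScalars hP _ hu)) hfu
    rw [← sub_add_cancel f u, hj, Nat.add_sub_cancel]
    exact add_mem (degreeBoundedSpan_mono P (by omega) hfu') hu

end DegreeBoundedSpan

end MvPolynomial

/-- If `Π_n ∩ I = 0`, `dim (Π_{n+1} ∩ I) = n+2` and `P` is a
finite subset of `Π_{n+1} ∩ I` spanning it, then `P` is an H-basis of `I`. -/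
theorem stmt5 (n : ℕ) (I : Ideal BPoly)
    (h0 : PiLE n ⊓ I.restrictScalars ℝ = ⊥)
    (h1 : Module.finrank ℝ ↥(PiLE (n + 1) ⊓ I.restrictScalars ℝ) = n + 2)
    (P : Finset BPoly)
    (hP : ∀ p ∈ P, p ∈ PiLE (n + 1) ⊓ I.restrictScalars ℝ)
    (hspan : Submodule.span ℝ (P : Set BPoly) = PiLE (n + 1) ⊓ I.restrictScalars ℝ) :
    IsHBasisSet I P := by
  have hPI : ∀ p ∈ P, p ∈ I := fun p hp => (hP p hp).2
  have hlow : ∀ f ∈ I, f.totalDegree ≤ n → f = 0 := fun f hf hdeg =>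
    (Submodule.mem_bot ℝ).mp (h0 ▸ ⟨(mem_restrictTotalDegree ..).mpr hdeg, hf⟩)
  have hlead : homogeneousSubmodule (Fin 2) ℝ (n + 1) ≤
      (Submodule.span ℝ (P : Set BPoly) ⊓ PiLE (n + 1)).map (homogeneousComponent (n + 1)) := by
    rw [hspan, inf_of_le_left inf_le_left]
    exact (map_homogeneousComponent_eq_homogeneousSubmodule inf_le_left (fun q hq => hlow q hq.2)
      (h1 ▸ finrank_homogeneousSubmodule_fin_two_le (n + 1))).ge
  refine ⟨hPI, fun f hf => ?_⟩
  obtain ⟨g, hg, hf⟩ := mem_degreeBoundedSpan_of_mem hPI hlow hlead hf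
  refine ⟨g, fun p hp => (hg p hp).trans (Nat.sub_le_sub_left ?_ _), hf⟩
  exact (mem_restrictTotalDegree ..).mp (hP p hp).1
end
end

section
/- Let Y_{n+1} ⊂ ℝ² be a Π_{n+1}-poised set and K a line such that #(K ∩ Y_{n+1}) = n + 2. Then the set Y_n := Y_{n+1} \ K is Π_n-poised. -/
/-!
Since `Y` is `Π_{n+1}`-poised, `#Y = dim Π_{n+1} = dim Π_n + (n + 2)`, so removing the `n + 2`
points on `K` leaves exactly `dim Π_n` points; it therefore suffices that no nonzero `p ∈ Π_n`
vanishes on `Y \ K`. For such a `p`, the product `k * p ∈ Π_{n+1}` vanishes on all of `Y`, hence is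
zero by poisedness, and `k ≠ 0` forces `p = 0`.
-/

open MvPolynomial

noncomputable section

open Finset Module

theorem MvPolynomial.finrank_restrictTotalDegree (σ R : Type*) [Fintype σ] [DecidableEq σ]
    [CommRing R] [Nontrivial R] (m : ℕ) :
    finrank R (restrictTotalDegree σ R m) =
      ∑ d ∈ range (m + 1), (Fintype.card σ + d - 1).choose d := by
  have hsupp : {s : σ →₀ ℕ | (s.sum fun _ e => e) ≤ m} =
      ↑((range (m + 1)).biUnion fun d => (univ : Finset σ).finsuppAntidiag d) := by
    ext s
    simp [Finsupp.sum_fintype]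
  rw [restrictTotalDegree, finrank_eq_nat_card_basis (basisRestrictSupport R _), hsupp,
    Nat.card_coe_set_eq, Set.ncard_coe_finset, card_biUnion]
  · simp [card_finsuppAntidiag_nat_eq_choose]
  · intro i _ j _ hij
    simp only [Function.onFun, disjoint_left, mem_finsuppAntidiag]
    rintro s ⟨rfl, -⟩ ⟨h, -⟩
    exact hij h

theorem finrank_PiLE_succ (m : ℕ) :
    finrank ℝ (PiLE (m + 1)) = finrank ℝ (PiLE m) + (m + 2) := by
  have hdim (m : ℕ) := finrank_restrictTotalDegree (Fin 2) ℝ m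
  rw [PiLE, PiLE, hdim, hdim, sum_range_succ _ (m + 1), Fintype.card_fin,
    show 2 + (m + 1) - 1 = m + 1 + 1 by omega, Nat.choose_succ_self_right]

theorem mem_PiLE {m : ℕ} {p : BPoly} : p ∈ PiLE m ↔ p.totalDegree ≤ m :=
  mem_restrictTotalDegree _ _ _

instance (m : ℕ) : Module.Finite ℝ (PiLE m) :=
  inferInstanceAs (Module.Finite ℝ (restrictTotalDegree (Fin 2) ℝ m))

def evalMap (m : ℕ) (Y : Finset Pt) : PiLE m →ₗ[ℝ] (Y → ℝ) where
  toFun p y := eval (y : Pt) (p : BPoly)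
  map_add' p q := by funext y; simp
  map_smul' c p := by funext y; simp

section Poised

variable {m : ℕ} {Y : Finset Pt}

theorem Poised.eq_zero_of_eval_eq_zero (hY : Poised m Y) {p : BPoly} (hp : p ∈ PiLE m)
    (hvan : ∀ y ∈ Y, eval y p = 0) : p = 0 := by
  obtain ⟨_, _, huniq⟩ := hY 0
  exact (huniq p ⟨hp, hvan⟩).trans (huniq 0 ⟨zero_mem _, by simp⟩).symm

theorem poised_iff_bijective_evalMap : Poised m Y ↔ Function.Bijective (evalMap m Y) := by
  constructor
  · intro hY
    refine ⟨?_, fun g => ?_⟩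
    · rw [← LinearMap.ker_eq_bot, LinearMap.ker_eq_bot']
      exact fun p hp => Subtype.ext (hY.eq_zero_of_eval_eq_zero p.2 fun y hy => congrFun hp ⟨y, hy⟩)
    · obtain ⟨p, ⟨hp, hpg⟩, -⟩ := hY fun x => if hx : x ∈ Y then g ⟨x, hx⟩ else 0
      exact ⟨⟨p, hp⟩, funext fun y => by simpa [evalMap] using hpg y y.2⟩
  · rintro ⟨hinj, hsurj⟩ f
    obtain ⟨p, hpf⟩ := hsurj fun y => f y
    refine ⟨p, ⟨p.2, fun y hy => congrFun hpf ⟨y, hy⟩⟩, fun q ⟨hq, hqf⟩ => ?_⟩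
    have : (⟨q, hq⟩ : PiLE m) = p := hinj <| hpf ▸ funext fun y => hqf y y.2
    exact congrArg Subtype.val this

theorem Poised.card_eq (hY : Poised m Y) : Y.card = finrank ℝ (PiLE m) := by
  rw [(LinearEquiv.ofBijective _ (poised_iff_bijective_evalMap.mp hY)).finrank_eq,
    finrank_fintype_fun_eq_card, Fintype.card_coe]

theorem poised_of_card_eq_of_eq_zero (hcard : Y.card = finrank ℝ (PiLE m))
    (hvan : ∀ p ∈ PiLE m, (∀ y ∈ Y, eval y p = 0) → p = 0) : Poised m Y := by
  have hinj : Function.Injective (evalMap m Y) := by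
    rw [← LinearMap.ker_eq_bot, LinearMap.ker_eq_bot']
    exact fun p hp => Subtype.ext (hvan p p.2 fun y hy => congrFun hp ⟨y, hy⟩)
  refine poised_iff_bijective_evalMap.mpr ⟨hinj, ?_⟩
  refine (LinearMap.injective_iff_surjective_of_finrank_eq_finrank ?_).mp hinj
  rw [← hcard, finrank_fintype_fun_eq_card, Fintype.card_coe]

theorem Poised.eq_zero_of_eval_eq_zero_off_zeroSet {d : ℕ} (hY : Poised (m + d) Y) {k p : BPoly}
    (hk : k ≠ 0) (hkd : k.totalDegree ≤ d) (hp : p ∈ PiLE m)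
    (hvan : ∀ y ∈ Y, eval y k ≠ 0 → eval y p = 0) : p = 0 := by
  have hkp : k * p ∈ PiLE (m + d) := mem_PiLE.mpr <|
    (totalDegree_mul k p).trans (by have := mem_PiLE.mp hp; omega)
  refine (mul_eq_zero.mp (hY.eq_zero_of_eval_eq_zero hkp fun y hy => ?_)).resolve_left hk
  by_cases hyk : eval y k = 0 <;> simp [hyk, hvan y hy]

end Poised

/-- If `Y_{n+1}` is `Π_{n+1}`-poised and `K = V(k)` is a line
meeting `Y_{n+1}` in `n+2` points, then `Y_n := Y_{n+1} \ K` is `Π_n`-poised. -/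
theorem stmt6 (n : ℕ) (Y : Finset Pt) (k : BPoly) (hk : k.totalDegree = 1)
    (hY : Poised (n + 1) Y)
    (hcard : ((Y : Set Pt) ∩ {x | eval x k = 0}).ncard = n + 2)
    (Y' : Finset Pt)
    (hY' : (Y' : Set Pt) = (Y : Set Pt) \ {x | eval x k = 0}) :
    Poised n Y' := by
  have hk0 : k ≠ 0 := by rintro rfl; simp at hk
  have hsplit := Set.ncard_inter_add_ncard_sdiff_eq_ncard (Y : Set Pt) {x | eval x k = 0}
  rw [hcard, ← hY', Set.ncard_coe_finset, Set.ncard_coe_finset] at hsplit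
  refine poised_of_card_eq_of_eq_zero ?_ fun p hp hvan => ?_
  · have := hY.card_eq
    rw [finrank_PiLE_succ] at this
    omega
  · refine hY.eq_zero_of_eval_eq_zero_off_zeroSet hk0 hk.le hp fun y hy hyk => hvan y ?_
    rw [← Finset.mem_coe, hY']
    exact ⟨hy, hyk⟩
end
end

section
/- Let Y_n ⊂ ℝ² be a Π_n-poised set and K a line with Y_n ∩ K = ∅. If Y_{n+1} is obtained from Y_n by adding n + 2 distinct points lying on K, then Y_{n+1} is Π_{n+1}-poised. -/
open MvPolynomial

noncomputable section

/-!
Parametrize the line `K` affinely by a coordinate `s`. Restricted to `K`, a polynomial of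
`Π_{n+1}` becomes a univariate polynomial of degree `≤ n + 1` in `s`, so it is determined by its
values at the `n + 2` points of `T`; and a polynomial minus its restriction, read back through
`s`, is divisible by `k`. Hence a polynomial of `Π_{n+1}` vanishing on `Y ∪ T` is `k q` with
`q ∈ Π_n` vanishing on `Y`, so it is zero. For existence, interpolate on `T` along `K` and
correct on `Y` by `k r`, where `r ∈ Π_n` interpolates the remaining values divided by `k`.
-/

theorem Finsupp.eq_zero_or_eq_single_one {σ : Type*} {m : σ →₀ ℕ}
    (hm : (m.sum fun _ e => e) ≤ 1) : m = 0 ∨ ∃ i, m = Finsupp.single i 1 := by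
  classical
  rw [← toMultiset_toFinsupp m]
  rcases Nat.le_one_iff_eq_zero_or_eq_one.mp ((card_toMultiset m).trans_le hm) with h | h
  · exact .inl (by rw [Multiset.card_eq_zero.mp h, Multiset.toFinsupp_zero])
  · obtain ⟨i, hi⟩ := Multiset.card_eq_one.mp h
    exact .inr ⟨i, by rw [hi, Multiset.toFinsupp_singleton]⟩

namespace MvPolynomial

theorem eq_C_add_sum_C_mul_X_of_totalDegree_le_one {σ R : Type*} [CommSemiring R] [Fintype σ]
    [DecidableEq σ] {p : MvPolynomial σ R} (hp : p.totalDegree ≤ 1) :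
    p = C (p.coeff 0) + ∑ i, C (p.coeff (Finsupp.single i 1)) * X i := by
  ext m
  simp only [coeff_add, coeff_C, coeff_sum, coeff_C_mul, coeff_X]
  by_cases hsupp : m ∈ p.support
  · rcases Finsupp.eq_zero_or_eq_single_one ((le_totalDegree hsupp).trans hp) with rfl | ⟨i, rfl⟩
    · simp
    · simp [Finsupp.single_left_inj, eq_comm (a := (0 : σ →₀ ℕ))]
  · rw [notMem_support_iff] at hsupp
    rw [hsupp, Finset.sum_eq_zero fun i _ => by split_ifs with h <;> simp [h, hsupp]]
    split_ifs with h <;> simp [h, hsupp]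

theorem dvd_aeval_sub_aeval {σ R S : Type*} [CommRing R] [CommRing S] [Algebra R S]
    (p : MvPolynomial σ R) {x y : σ → S} {d : S} (h : ∀ i, d ∣ x i - y i) :
    d ∣ aeval x p - aeval y p := by
  have hxy : (Ideal.Quotient.mkₐ R (Ideal.span {d})).comp (aeval x) =
      (Ideal.Quotient.mkₐ R (Ideal.span {d})).comp (aeval y) := by
    ext i
    simpa [Ideal.Quotient.eq, Ideal.mem_span_singleton] using h i
  rw [← Ideal.mem_span_singleton, ← Ideal.Quotient.eq]
  exact congr($hxy p)

open Polynomial in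
theorem natDegree_aeval_le_totalDegree {σ R : Type*} [CommSemiring R] (p : MvPolynomial σ R)
    {f : σ → R[X]} (hf : ∀ i, (f i).natDegree ≤ 1) :
    (aeval f p).natDegree ≤ p.totalDegree := by
  classical
  rw [aeval_eq_eval₂Hom, coe_eval₂Hom, eval₂_eq]
  refine natDegree_sum_le_of_forall_le _ _ fun m hm => ?_
  refine (natDegree_C_mul_le _ _).trans ((natDegree_prod_le _ _).trans ?_)
  calc ∑ i ∈ m.support, (f i ^ m i).natDegree ≤ ∑ i ∈ m.support, m i :=
        Finset.sum_le_sum fun i _ => (natDegree_pow_le_of_le _ (hf i)).trans (by simp)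
    _ ≤ p.totalDegree := le_totalDegree hm

theorem totalDegree_polynomial_aeval_le {σ R : Type*} [CommSemiring R] (g : Polynomial R)
    {L : MvPolynomial σ R} (hL : L.totalDegree ≤ 1) :
    (Polynomial.aeval L g).totalDegree ≤ g.natDegree := by
  rw [Polynomial.aeval_eq_sum_range]
  refine (totalDegree_finsetSum _ _).trans (Finset.sup_le fun i hi => ?_)
  rw [Finset.mem_range] at hi
  calc (g.coeff i • L ^ i).totalDegree ≤ (L ^ i).totalDegree := totalDegree_smul_le _ _
    _ ≤ i * L.totalDegree := totalDegree_pow _ _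
    _ ≤ g.natDegree := by nlinarith

theorem eval_polynomial_aeval {σ R : Type*} [CommSemiring R] (x : σ → R)
    (L : MvPolynomial σ R) (g : Polynomial R) :
    eval x (Polynomial.aeval L g) = g.eval (eval x L) := by
  change aeval x (Polynomial.aeval L g) = _
  rw [← Polynomial.aeval_algHom_apply, Polynomial.coe_aeval_eq_eval]
  rfl

open Polynomial in
theorem polynomial_eval_aeval {σ R : Type*} [CommSemiring R] (f : σ → R[X])
    (p : MvPolynomial σ R) (s : R) :
    (aeval f p).eval s = eval (fun i => (f i).eval s) p := by
  rw [← coe_aeval_eq_eval, ← Polynomial.coe_aeval_eq_eval, ← AlgHom.comp_apply, comp_aeval]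
  rfl

end MvPolynomial

/-- An affine parametrization `s ↦ ((param i).eval s)ᵢ` of the line `V(k)`, inverted on the line
by `coord`, and compatible with `k` in the sense that `Xᵢ ≡ paramᵢ(coord) mod k`. -/
structure LineChart (k : BPoly) where
  coord : BPoly
  param : Fin 2 → Polynomial ℝ
  totalDegree_coord_le : coord.totalDegree ≤ 1
  natDegree_param_le : ∀ i, (param i).natDegree ≤ 1
  dvd_X_sub : ∀ i, k ∣ X i - Polynomial.aeval coord (param i)
  eval_param_eval_coord : ∀ x, eval x k = 0 → ∀ i, (param i).eval (eval x coord) = x i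

theorem sq_add_sq_ne_zero_of_ne_zero {a : Pt} (ha : a ≠ 0) : a 0 ^ 2 + a 1 ^ 2 ≠ 0 := by
  contrapose! ha
  have h0 : a 0 = 0 := by nlinarith [sq_nonneg (a 0), sq_nonneg (a 1)]
  have h1 : a 1 = 0 := by nlinarith [sq_nonneg (a 0), sq_nonneg (a 1)]
  ext i
  fin_cases i <;> assumption

namespace LineChart

variable {k : BPoly}

/-- The chart of the line `c + a₀ x₀ + a₁ x₁ = 0`: writing `v = (-a₁, a₀)` and `N = |a|²`, the
point `x` of the line is `-c a / N + s v` with coordinate `s = ⟨v, x⟩ / N`. -/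
def ofAffine (c : ℝ) (a : Pt) (ha : a ≠ 0) : LineChart (C c + ∑ i, C (a i) * X i) where
  coord := C (-a 1 / (a 0 ^ 2 + a 1 ^ 2)) * X 0 + C (a 0 / (a 0 ^ 2 + a 1 ^ 2)) * X 1
  param := ![Polynomial.C (-c * a 0 / (a 0 ^ 2 + a 1 ^ 2)) - Polynomial.C (a 1) * Polynomial.X,
    Polynomial.C (-c * a 1 / (a 0 ^ 2 + a 1 ^ 2)) + Polynomial.C (a 0) * Polynomial.X]
  totalDegree_coord_le := (totalDegree_add _ _).trans <|
    max_le ((totalDegree_mul _ _).trans (by simp)) ((totalDegree_mul _ _).trans (by simp))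
  natDegree_param_le i := by
    fin_cases i <;> simp only [Fin.zero_eta, Fin.mk_one, Fin.isValue, Matrix.cons_val_zero,
      Matrix.cons_val_one] <;> compute_degree
  dvd_X_sub i := by
    have hN := sq_add_sq_ne_zero_of_ne_zero ha
    refine ⟨C (a i / (a 0 ^ 2 + a 1 ^ 2)), funext fun x => ?_⟩
    fin_cases i <;>
      simp only [Fin.zero_eta, Fin.mk_one, Fin.isValue, Matrix.cons_val_zero, Matrix.cons_val_one,
        Matrix.cons_val_fin_one, Polynomial.aeval_C,
        Polynomial.aeval_X, algebraMap_eq, map_add, map_sub, map_mul, eval_X, eval_C,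
        Fin.sum_univ_two] <;>
      field_simp <;> ring
  eval_param_eval_coord x hx i := by
    have hN := sq_add_sq_ne_zero_of_ne_zero ha
    simp only [map_add, eval_C, map_mul, eval_X, Fin.sum_univ_two] at hx
    fin_cases i <;>
      simp only [Fin.zero_eta, Fin.mk_one, Fin.isValue, Matrix.cons_val_zero, Matrix.cons_val_one,
        Matrix.cons_val_fin_one, map_add, map_mul, eval_C, eval_X, Polynomial.eval_add,
        Polynomial.eval_sub, Polynomial.eval_C, Polynomial.eval_mul, Polynomial.eval_X] <;>
      field_simp
    · linear_combination (-a 0) * hx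
    · linear_combination (-a 1) * hx

theorem nonempty_of_totalDegree_eq_one (hk : k.totalDegree = 1) : Nonempty (LineChart k) := by
  classical
  have hform := eq_C_add_sum_C_mul_X_of_totalDegree_le_one hk.le
  have ha : (fun i => k.coeff (Finsupp.single i 1) : Pt) ≠ 0 := by
    intro ha0
    have hdeg := congr_arg totalDegree hform
    simp only [fun i => congr_fun ha0 i, Pi.zero_apply, map_zero, zero_mul, Finset.sum_const_zero,
      add_zero, totalDegree_C, hk] at hdeg
    exact one_ne_zero hdeg
  rw [hform]
  exact ⟨ofAffine _ _ ha⟩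

theorem injOn_eval_coord (χ : LineChart k) :
    Set.InjOn (fun x => eval x χ.coord) {x | eval x k = 0} :=
  fun x hx y hy hxy => funext fun i => by
    rw [← χ.eval_param_eval_coord x hx i, ← χ.eval_param_eval_coord y hy i]
    exact congrArg (Polynomial.eval · (χ.param i)) hxy

theorem exists_interpolant (χ : LineChart k) {T : Finset Pt} (hT : ∀ t ∈ T, eval t k = 0)
    (f : Pt → ℝ) {m : ℕ} (hm : T.card ≤ m + 1) : ∃ q ∈ PiLE m, ∀ t ∈ T, eval t q = f t := by
  have hinj : Set.InjOn (fun x => eval x χ.coord) T :=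
    χ.injOn_eval_coord.mono fun t ht => hT t ht
  set g := Lagrange.interpolate T (fun x => eval x χ.coord) f
  have hg_lt : g.degree < ↑(m + 1) :=
    (Lagrange.degree_interpolate_lt f hinj).trans_le (by exact_mod_cast hm)
  have hg : g.natDegree ≤ m :=
    Polynomial.natDegree_le_iff_degree_le.mpr (Order.lt_succ_iff.mp hg_lt)
  refine ⟨Polynomial.aeval χ.coord g, ?_, fun t ht => ?_⟩
  · exact (mem_restrictTotalDegree _ _ _).mpr
      ((totalDegree_polynomial_aeval_le g χ.totalDegree_coord_le).trans hg)
  · rw [eval_polynomial_aeval]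
    exact Lagrange.eval_interpolate_at_node f hinj ht

theorem dvd_of_eval_eq_zero (χ : LineChart k) {T : Finset Pt} (hT : ∀ t ∈ T, eval t k = 0)
    {p : BPoly} (hdeg : p.totalDegree < T.card) (hp : ∀ t ∈ T, eval t p = 0) : k ∣ p := by
  have hr : aeval χ.param p = 0 := by
    refine Polynomial.eq_zero_of_degree_lt_of_eval_index_eq_zero T
      (χ.injOn_eval_coord.mono fun t ht => hT t ht) ?_ fun t ht => ?_
    · exact Polynomial.degree_le_natDegree.trans_lt <| by
        exact_mod_cast (natDegree_aeval_le_totalDegree p χ.natDegree_param_le).trans_lt hdeg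
    · rw [polynomial_eval_aeval, funext (χ.eval_param_eval_coord t (hT t ht))]
      exact hp t ht
  have key := dvd_aeval_sub_aeval p χ.dvd_X_sub
  rwa [aeval_X_left_apply, ← comp_aeval, AlgHom.comp_apply, hr, map_zero, sub_zero] at key

end LineChart

theorem poised_iff {n : ℕ} {Y : Finset Pt} :
    Poised n Y ↔ PIndep n Y ∧ ∀ p ∈ PiLE n, (∀ y ∈ Y, eval y p = 0) → p = 0 := by
  refine ⟨fun hY => ⟨fun f => (hY f).exists, fun p hp hpY => ?_⟩,
    fun ⟨hind, hzero⟩ f => ?_⟩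
  · exact (hY 0).unique ⟨hp, hpY⟩ ⟨zero_mem _, fun y _ => map_zero _⟩
  · obtain ⟨p, hp, hpY⟩ := hind f
    refine ⟨p, ⟨hp, hpY⟩, fun q ⟨hq, hqY⟩ =>
      sub_eq_zero.mp (hzero _ (sub_mem hq hp) fun y hy => ?_)⟩
    rw [map_sub, hqY y hy, hpY y hy, sub_self]

theorem mul_mem_PiLE_succ_iff {k q : BPoly} (hk : k.totalDegree = 1) {n : ℕ} :
    k * q ∈ PiLE (n + 1) ↔ q ∈ PiLE n := by
  rcases eq_or_ne q 0 with rfl | hq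
  · simp only [mul_zero, zero_mem]
  have hk0 : k ≠ 0 := by rintro rfl; simp at hk
  simp only [PiLE, mem_restrictTotalDegree, totalDegree_mul_of_isDomain hk0 hq, hk]
  omega

/-- If `Y_n` is `Π_n`-poised, `K = V(k)` is a line with
`Y_n ∩ K = ∅`, and `Y_{n+1}` is obtained by adding `n+2` distinct points of `K`,
then `Y_{n+1}` is `Π_{n+1}`-poised. -/
theorem stmt7 (n : ℕ) (Y T : Finset Pt) (k : BPoly) (hk : k.totalDegree = 1)
    (hY : Poised n Y)
    (hYK : ∀ y ∈ Y, eval y k ≠ 0)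
    (hT : ∀ t ∈ T, eval t k = 0)
    (hTcard : T.card = n + 2) :
    Poised (n + 1) (Y ∪ T) := by
  obtain ⟨χ⟩ := LineChart.nonempty_of_totalDegree_eq_one hk
  rw [poised_iff] at hY ⊢
  refine ⟨fun f => ?_, fun p hp hpYT => ?_⟩
  · obtain ⟨q, hq, hqT⟩ := χ.exists_interpolant hT f hTcard.le
    obtain ⟨r, hr, hrY⟩ := hY.1 fun y => (f y - eval y q) / eval y k
    refine ⟨q + k * r, add_mem hq ((mul_mem_PiLE_succ_iff hk).mpr hr), fun y hy => ?_⟩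
    rcases Finset.mem_union.mp hy with hy | hy
    · rw [map_add, map_mul, hrY y hy, mul_div_cancel₀ _ (hYK y hy), add_sub_cancel]
    · rw [map_add, map_mul, hT y hy, zero_mul, add_zero, hqT y hy]
  · have hdeg : p.totalDegree < T.card := by
      rw [hTcard]; exact Nat.lt_succ_of_le ((mem_restrictTotalDegree _ _ _).mp hp)
    obtain ⟨q, rfl⟩ := χ.dvd_of_eval_eq_zero hT hdeg fun t ht => hpYT t (by simp [ht])
    rw [hY.2 q ((mul_mem_PiLE_succ_iff hk).mp hp) fun y hy => ?_, mul_zero]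
    have hqy := hpYT y (by simp [hy])
    rw [map_mul] at hqy
    exact (mul_eq_zero.mp hqy).resolve_left (hYK y hy)
end
end
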